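/- arXiv:2508.03136 — 3 statements merged into one kernel-verified Lean document; each statement's English description precedes it below -/
import Mathlib

section
/- Under Assumption 1, the optimal robust average-reward Bellman equation is solvable: there exist a constant g ∈ ℝ and a vector h : S → ℝ such that h(s) = max_{a ∈ A} { r(s,a) − g + σ_{𝒫^a_s}(h) } for every s ∈ S, and moreover g equals the optimal robust average reward, i.e. g = sup over all stationary policies π of g^π_𝒫(s), for every s ∈ S. -/
open scoped BigOperators
open Matrix Filter

/-!
Vanishing discount. For `β < 1` the robust discounted Bellman operator is monotone and shifts
by `β c` when its argument is shifted by a constant `c`, hence a `β`-contraction with a fixed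
point `V_β`. Fixing an action `a₀` and a worst-case kernel `P` for `V_β`, the function `V_β` is
`β`-superharmonic for the chain `P^{a₀}`. Assumption 1 and compactness of the kernels give `K`
and `δ > 0` such that every such chain moves from any state to any state within `K + 1` steps
with probability at least `δ`; this bounds the span of `V_β` by `(K + 1) / δ` uniformly in `β`.
A limit point of `((1 - β) V_β(s₀), V_β - V_β(s₀))` as `β → 1` solves the Bellman equation.
Conversely a solution `(g, h)` yields Poisson inequalities: against a worst-case kernel for `h`
every policy has Cesàro averages at most `g + O(1/n)`, and the greedy policy has at least
`g - O(1/n)` against every kernel, so `g` is the optimal robust average reward.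
-/

/-- Support function `σ_Q(V) = min_{p ∈ Q} ∑_{s'} p(s') V(s')` (as an infimum,
which is attained when `Q` is nonempty and compact). -/
noncomputable def suppF {S : Type*} [Fintype S] (Q : Set (S → ℝ)) (V : S → ℝ) : ℝ :=
  sInf ((fun p => ∑ s', p s' * V s') '' Q)

/-- The stochastic matrix `P^π` induced by a stationary policy `π` and a kernel `P`. -/
noncomputable def polMat {S A : Type*} [Fintype S] [Fintype A]
    (π : S → A → ℝ) (P : S → A → S → ℝ) : Matrix S S ℝ :=
  Matrix.of fun s s' => ∑ a, π s a * P s a s'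

/-- The reward vector `r^π`. -/
noncomputable def polRew {S A : Type*} [Fintype A]
    (π : S → A → ℝ) (r : S → A → ℝ) : S → ℝ :=
  fun s => ∑ a, π s a * r s a

/-- The average reward `g^π_P(s) = liminf_n (1/n) ∑_{t<n} ((P^π)^t r^π)(s)`. -/
noncomputable def avgR {S A : Type*} [Fintype S] [DecidableEq S] [Fintype A]
    (π : S → A → ℝ) (P : S → A → S → ℝ) (r : S → A → ℝ) (s : S) : ℝ :=
  Filter.liminf
    (fun n : ℕ => (∑ t ∈ Finset.range n, ((polMat π P ^ t) *ᵥ polRew π r) s) / n)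
    Filter.atTop

/-- The robust average reward `g^π_U(s) = inf_{P ∈ U} g^π_P(s)`. -/
noncomputable def robAvgR {S A : Type*} [Fintype S] [DecidableEq S] [Fintype A]
    (U : S → A → Set (S → ℝ)) (π : S → A → ℝ) (r : S → A → ℝ) (s : S) : ℝ :=
  sInf {x | ∃ P : S → A → S → ℝ, (∀ s' a, P s' a ∈ U s' a) ∧ x = avgR π P r s}

/-- A stochastic matrix is irreducible: all states communicate. -/
def IrredM {S : Type*} [Fintype S] [DecidableEq S] (M : Matrix S S ℝ) : Prop :=
  ∀ s s' : S, ∃ k : ℕ, 1 ≤ k ∧ 0 < (M ^ k) s s'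

/-- Assumption 1: for every deterministic policy `d` and every kernel `P ∈ U`,
the matrix `P^d` is irreducible. -/
def Assump1 {S A : Type*} [Fintype S] [DecidableEq S]
    (U : S → A → Set (S → ℝ)) : Prop :=
  ∀ (d : S → A) (P : S → A → S → ℝ), (∀ s a, P s a ∈ U s a) →
    IrredM (Matrix.of fun s s' => P s (d s) s')

open Topology

section StdSimplex

variable {ι : Type*} [Fintype ι] {p : ι → ℝ}

lemma dotProduct_const_of_mem_stdSimplex (hp : p ∈ stdSimplex ℝ ι) (c : ℝ) :
    p ⬝ᵥ (fun _ => c) = c := by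
  simp [dotProduct, ← Finset.sum_mul, hp.2]

lemma dotProduct_add_const_of_mem_stdSimplex (hp : p ∈ stdSimplex ℝ ι) (V : ι → ℝ) (c : ℝ) :
    p ⬝ᵥ (V + fun _ => c) = p ⬝ᵥ V + c := by
  rw [dotProduct_add, dotProduct_const_of_mem_stdSimplex hp]

lemma monotone_dotProduct_of_mem_stdSimplex (hp : p ∈ stdSimplex ℝ ι) :
    Monotone (p ⬝ᵥ ·) :=
  fun _ _ h => dotProduct_le_dotProduct_of_nonneg_left h hp.1

lemma dotProduct_mem_Icc_of_mem_stdSimplex (hp : p ∈ stdSimplex ℝ ι) {v : ι → ℝ} {a b : ℝ}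
    (hv : ∀ i, v i ∈ Set.Icc a b) : p ⬝ᵥ v ∈ Set.Icc a b :=
  ⟨dotProduct_const_of_mem_stdSimplex hp a ▸ monotone_dotProduct_of_mem_stdSimplex hp
      fun i => (hv i).1,
    dotProduct_const_of_mem_stdSimplex hp b ▸ monotone_dotProduct_of_mem_stdSimplex hp
      fun i => (hv i).2⟩

end StdSimplex

lemma dist_le_of_monotone_of_map_add_const {ι : Type*} [Fintype ι] {F : (ι → ℝ) → ℝ} {β : ℝ}
    (hF : Monotone F) (hadd : ∀ V c, F (V + fun _ => c) = F V + β * c)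
    (V W : ι → ℝ) : dist (F V) (F W) ≤ β * dist V W := by
  have key : ∀ V W : ι → ℝ, F V ≤ F W + β * dist V W := fun V W => by
    rw [← hadd]
    refine hF fun i => ?_
    have := (le_abs_self _).trans (Real.dist_eq (V i) (W i) ▸ dist_le_pi_dist V W i)
    simp only [Pi.add_apply]
    linarith
  have h₁ := key V W
  have h₂ := key W V
  rw [dist_comm W V] at h₂
  rw [Real.dist_eq, abs_sub_le_iff]
  constructor <;> linarith

section SupportFunction

variable {S : Type*} [Fintype S]

def IsUncertaintySet (Q : Set (S → ℝ)) : Prop :=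
  Q.Nonempty ∧ IsCompact Q ∧ Q ⊆ stdSimplex ℝ S

variable {Q : Set (S → ℝ)}

lemma suppF_le_dotProduct (hQ : IsCompact Q) {p : S → ℝ} (hp : p ∈ Q) (V : S → ℝ) :
    suppF Q V ≤ p ⬝ᵥ V :=
  csInf_le (hQ.image (continuous_id.dotProduct continuous_const)).bddBelow ⟨p, hp, rfl⟩

lemma exists_suppF_eq_dotProduct (hQ : IsUncertaintySet Q) (V : S → ℝ) :
    ∃ p ∈ Q, suppF Q V = p ⬝ᵥ V := by
  obtain ⟨p, hp, hpV⟩ := (hQ.2.1.image (continuous_id.dotProduct continuous_const)).sInf_mem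
    (hQ.1.image (· ⬝ᵥ V))
  exact ⟨p, hp, hpV.symm⟩

lemma suppF_add_const (hQ : IsUncertaintySet Q) (V : S → ℝ) (c : ℝ) :
    suppF Q (V + fun _ => c) = suppF Q V + c := by
  have himage : (· ⬝ᵥ (V + fun _ => c)) '' Q = (OrderIso.addRight c) '' ((· ⬝ᵥ V) '' Q) := by
    rw [Set.image_image]
    exact Set.image_congr fun p hp => dotProduct_add_const_of_mem_stdSimplex (hQ.2.2 hp) V c
  have hbdd := (hQ.2.1.image (continuous_id.dotProduct (continuous_const (y := V)))).bddBelow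
  unfold suppF
  exact (congrArg sInf himage).trans ((OrderIso.addRight c).map_csInf' (hQ.1.image _) hbdd).symm

lemma suppF_const (hQ : IsUncertaintySet Q) (c : ℝ) : suppF Q (fun _ => c) = c := by
  obtain ⟨p, hp, hpc⟩ := exists_suppF_eq_dotProduct hQ (fun _ => c)
  rw [hpc, dotProduct_const_of_mem_stdSimplex (hQ.2.2 hp)]

lemma monotone_suppF (hQ : IsUncertaintySet Q) : Monotone (suppF Q) := by
  intro V W hVW
  obtain ⟨p, hp, hpW⟩ := exists_suppF_eq_dotProduct hQ W
  exact hpW ▸ (suppF_le_dotProduct hQ.2.1 hp V).trans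
    (monotone_dotProduct_of_mem_stdSimplex (hQ.2.2 hp) hVW)

lemma continuous_suppF (hQ : IsUncertaintySet Q) : Continuous (suppF Q) :=
  (LipschitzWith.of_dist_le_mul (K := 1) fun V W => by
    simpa using dist_le_of_monotone_of_map_add_const (β := 1) (monotone_suppF hQ)
      (fun V c => by rw [suppF_add_const hQ, one_mul]) V W).continuous

end SupportFunction

section RobustBellman

variable {S A : Type*} [Fintype S] [Fintype A] {U : S → A → Set (S → ℝ)} {r : S → A → ℝ}

variable (U r) in
noncomputable def robustBellman (β g : ℝ) (V : S → ℝ) : S → ℝ :=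
  fun s => ⨆ a, (r s a - g + β * suppF (U s a) V)

lemma robustBellman_add_const [Nonempty A] (hU : ∀ s a, IsUncertaintySet (U s a))
    (β g g' : ℝ) (V : S → ℝ) (c : ℝ) :
    robustBellman U r β g (V + fun _ => c) =
      robustBellman U r β g' V + fun _ => β * c + g' - g := by
  ext s
  have hterm : ∀ a, r s a - g + β * suppF (U s a) (V + fun _ => c) =
      OrderIso.addRight (β * c + g' - g) (r s a - g' + β * suppF (U s a) V) := fun a => by
    rw [suppF_add_const (hU s a), OrderIso.addRight_apply]
    ring
  simp only [robustBellman, Pi.add_apply, hterm]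
  exact ((OrderIso.addRight _).map_ciSup (Finite.bddAbove_range _)).symm

lemma monotone_robustBellman (hU : ∀ s a, IsUncertaintySet (U s a)) {β : ℝ} (hβ : 0 ≤ β)
    (g : ℝ) : Monotone (robustBellman U r β g) := fun _ _ hVW s =>
  ciSup_mono (Finite.bddAbove_range _) fun a => by
    gcongr
    exact monotone_suppF (hU s a) hVW

lemma dist_robustBellman_le [Nonempty A] (hU : ∀ s a, IsUncertaintySet (U s a)) {β : ℝ}
    (hβ : 0 ≤ β) (g : ℝ) (V W : S → ℝ) :
    dist (robustBellman U r β g V) (robustBellman U r β g W) ≤ β * dist V W :=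
  (dist_pi_le_iff (by positivity)).2 fun s =>
    dist_le_of_monotone_of_map_add_const (fun _ _ h => monotone_robustBellman hU hβ g h s)
      (fun V c => by simp [robustBellman_add_const hU β g g V c]) V W

lemma continuous_robustBellman [Nonempty A] (hU : ∀ s a, IsUncertaintySet (U s a)) :
    Continuous fun x : ℝ × ℝ × (S → ℝ) => robustBellman U r x.1 x.2.1 x.2.2 := by
  refine continuous_pi fun s => ?_
  simp only [robustBellman, ← Finset.sup'_univ_eq_ciSup]
  exact Continuous.finset_sup'_apply _ fun a _ => (continuous_const.sub continuous_snd.fst).add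
    (continuous_fst.mul ((continuous_suppF (hU s a)).comp continuous_snd.snd))

lemma exists_robustBellman_eq_self [Nonempty A] (hU : ∀ s a, IsUncertaintySet (U s a))
    {β : ℝ} (hβ₀ : 0 ≤ β) (hβ₁ : β < 1) (g : ℝ) : ∃ V, robustBellman U r β g V = V := by
  have hβ : (Real.toNNReal β : ℝ) = β := Real.coe_toNNReal β hβ₀
  have hcontr : ContractingWith (Real.toNNReal β) (robustBellman U r β g) :=
    ⟨Real.toNNReal_lt_one.2 hβ₁, LipschitzWith.of_dist_le_mul fun V W => by
      rw [hβ]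
      exact dist_robustBellman_le hU hβ₀ g V W⟩
  exact ⟨_, hcontr.fixedPoint_isFixedPt⟩

lemma robustBellman_eq_self_bounds [Nonempty S] [Nonempty A]
    (hU : ∀ s a, IsUncertaintySet (U s a)) (hr : ∀ s a, r s a ∈ Set.Icc (0 : ℝ) 1) {β : ℝ}
    (hβ₀ : 0 ≤ β) (hβ₁ : β < 1) {V : S → ℝ} (hV : robustBellman U r β 0 V = V) (s : S) :
    0 ≤ V s ∧ (1 - β) * V s ≤ 1 := by
  obtain ⟨y, hy⟩ := Finite.exists_min V
  obtain ⟨x, hx⟩ := Finite.exists_max V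
  obtain ⟨a₀⟩ := ‹Nonempty A›
  have hsupp_ge : ∀ a, V y ≤ suppF (U y a) V := fun a =>
    suppF_const (hU y a) (V y) ▸ monotone_suppF (hU y a) hy
  have hsupp_le : ∀ a, suppF (U x a) V ≤ V x := fun a =>
    suppF_const (hU x a) (V x) ▸ monotone_suppF (hU x a) hx
  have hlow : β * V y ≤ V y := by
    calc β * V y ≤ r y a₀ - 0 + β * suppF (U y a₀) V := by
          nlinarith [(hr y a₀).1, hsupp_ge a₀]
      _ ≤ robustBellman U r β 0 V y :=
          le_ciSup (f := fun a => r y a - 0 + β * suppF (U y a) V) (Finite.bddAbove_range _) a₀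
      _ = V y := congrFun hV y
  have hupp : V x ≤ 1 + β * V x := by
    calc V x = robustBellman U r β 0 V x := (congrFun hV x).symm
      _ ≤ 1 + β * V x := ciSup_le fun a => by nlinarith [(hr x a).2, hsupp_le a]
  constructor <;> nlinarith [hy s, hx s]

lemma robustBellman_sub_const_eq_self [Nonempty A] (hU : ∀ s a, IsUncertaintySet (U s a))
    {β : ℝ} {V : S → ℝ} (hV : robustBellman U r β 0 V = V) (c : ℝ) :
    robustBellman U r β ((1 - β) * c) (V - fun _ => c) = V - fun _ => c := by
  have hshift := robustBellman_add_const (r := r) hU β 0 ((1 - β) * c) (V - fun _ => c) c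
  rw [sub_add_cancel, hV] at hshift
  ext s
  have := congrFun hshift s
  simp only [Pi.add_apply, Pi.sub_apply] at this ⊢
  linarith

end RobustBellman

section Stochastic

variable {S : Type*} [Fintype S] [DecidableEq S] {M : Matrix S S ℝ}

lemma mem_rowStochastic_iff_forall_mem_stdSimplex :
    M ∈ rowStochastic ℝ S ↔ ∀ s, M s ∈ stdSimplex ℝ S := by
  simp [mem_rowStochastic_iff_sum, stdSimplex, forall_and]

lemma monotone_mulVec_of_mem_rowStochastic (hM : M ∈ rowStochastic ℝ S) :
    Monotone (M *ᵥ ·) := fun _ _ h s =>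
  monotone_dotProduct_of_mem_stdSimplex (mem_rowStochastic_iff_forall_mem_stdSimplex.1 hM s) h

lemma mulVec_const_of_mem_rowStochastic (hM : M ∈ rowStochastic ℝ S) (c : ℝ) :
    M *ᵥ (fun _ => c) = fun _ => c :=
  funext fun s => dotProduct_const_of_mem_stdSimplex
    (mem_rowStochastic_iff_forall_mem_stdSimplex.1 hM s) c

lemma pow_smul_pow_mulVec_le (hM : M ∈ rowStochastic ℝ S) {β : ℝ} (hβ : 0 ≤ β) {v : S → ℝ}
    (hv : β • (M *ᵥ v) ≤ v) (k : ℕ) : β ^ k • (M ^ k *ᵥ v) ≤ v := by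
  induction k with
  | zero => simp
  | succ k ih =>
    calc β ^ (k + 1) • (M ^ (k + 1) *ᵥ v) = β ^ k • (M ^ k *ᵥ (β • (M *ᵥ v))) := by
          rw [pow_succ, pow_succ, ← mulVec_mulVec, mulVec_smul, smul_smul]
      _ ≤ β ^ k • (M ^ k *ᵥ v) := smul_le_smul_of_nonneg_left
          (monotone_mulVec_of_mem_rowStochastic (pow_mem hM k) hv) (pow_nonneg hβ k)
      _ ≤ v := ih

/-- Iterating superharmonicity from the minimiser `y` gives
`β ^ k * (v y + (M ^ k) y x * (v x - v y)) ≤ v y`; with `1 - β ^ k ≤ k * (1 - β)` this bounds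
the span of `v` independently of `β`. -/
lemma pow_apply_mul_sub_le (hM : M ∈ rowStochastic ℝ S) {β : ℝ} (hβ₀ : 0 ≤ β) (hβ₁ : β ≤ 1)
    {v : S → ℝ} (hv : β • (M *ᵥ v) ≤ v) {x y : S} (hx : (1 - β) * v x ≤ 1)
    (hy : ∀ z, v y ≤ v z) (k : ℕ) : (M ^ k) y x * (v x - v y) ≤ k := by
  have hMk := pow_mem hM k
  have hq₀ : 0 ≤ (M ^ k) y x := nonneg_of_mem_rowStochastic hMk
  have hq₁ : (M ^ k) y x ≤ 1 := le_one_of_mem_rowStochastic hMk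
  have hdrift : v y + (M ^ k) y x * (v x - v y) ≤ (M ^ k *ᵥ v) y := by
    have hsplit : (M ^ k *ᵥ v) y = v y + ∑ z, (M ^ k) y z * (v z - v y) := by
      simp only [mul_sub, Finset.sum_sub_distrib, ← Finset.sum_mul,
        sum_row_of_mem_rowStochastic hMk, one_mul, mulVec, dotProduct]
      ring
    rw [hsplit]
    gcongr
    exact Finset.single_le_sum (f := fun z => (M ^ k) y z * (v z - v y))
      (fun z _ => mul_nonneg (nonneg_of_mem_rowStochastic hMk) (sub_nonneg.2 (hy z)))
      (Finset.mem_univ x)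
  have hdecay : β ^ k * (M ^ k *ᵥ v) y ≤ v y := pow_smul_pow_mulVec_le hM hβ₀ hv k y
  have hbern : 1 - β ^ k ≤ k * (1 - β) := by
    have := one_add_mul_le_pow (a := β - 1) (by linarith) k
    rw [add_sub_cancel] at this
    linarith
  have hb₀ : 0 ≤ β ^ k := pow_nonneg hβ₀ k
  have hb₁ : β ^ k ≤ 1 := pow_le_one₀ hβ₀ hβ₁
  have hD : 0 ≤ v x - v y := sub_nonneg.2 (hy x)
  have hgain : (M ^ k) y x * (v x - v y) ≤ (1 - β ^ k) * v x := by
    nlinarith [mul_le_mul_of_nonneg_left hdrift hb₀, mul_le_mul_of_nonneg_right hq₁ hD,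
      mul_nonneg (sub_nonneg.2 hb₁) (mul_nonneg hq₀ hD)]
  rcases le_total 0 (v x) with hvx | hvx
  · nlinarith [mul_le_mul_of_nonneg_right hbern hvx]
  · nlinarith [mul_nonneg (sub_nonneg.2 hb₁) (neg_nonneg.2 hvx)]

end Stochastic

section UniformHitting

variable {S : Type*} [Fintype S] [DecidableEq S] [Nonempty S]

noncomputable def minMaxPowApply (K : ℕ) (M : Matrix S S ℝ) : ℝ :=
  Finset.univ.inf' Finset.univ_nonempty fun p : S × S =>
    (Finset.range (K + 1)).sup' Finset.nonempty_range_add_one fun k => (M ^ (k + 1)) p.1 p.2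

lemma le_minMaxPowApply_iff {K : ℕ} {M : Matrix S S ℝ} {δ : ℝ} :
    δ ≤ minMaxPowApply K M ↔ ∀ x y, ∃ k ≤ K, δ ≤ (M ^ (k + 1)) x y := by
  simp [minMaxPowApply, Finset.le_inf'_iff, Finset.le_sup'_iff]

lemma pos_minMaxPowApply_iff {K : ℕ} {M : Matrix S S ℝ} :
    0 < minMaxPowApply K M ↔ ∀ x y, ∃ k ≤ K, 0 < (M ^ (k + 1)) x y := by
  simp [minMaxPowApply, Finset.lt_inf'_iff, Finset.lt_sup'_iff]

lemma monotone_minMaxPowApply (M : Matrix S S ℝ) : Monotone fun K => minMaxPowApply K M :=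
  fun _ _ hK => le_minMaxPowApply_iff.2 fun x y =>
    (le_minMaxPowApply_iff.1 le_rfl x y).imp fun _ hk => ⟨hk.1.trans hK, hk.2⟩

lemma continuous_minMaxPowApply (K : ℕ) : Continuous (minMaxPowApply (S := S) K) :=
  Continuous.finset_inf'_apply _ fun _ _ => Continuous.finset_sup'_apply _ fun k _ =>
    (continuous_pow (k + 1)).matrix_elem _ _

lemma IsCompact.exists_forall_le_pow_apply {𝓜 : Set (Matrix S S ℝ)} (h𝓜 : IsCompact 𝓜)
    (hirr : ∀ M ∈ 𝓜, IrredM M) :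
    ∃ K δ, 0 < δ ∧ ∀ M ∈ 𝓜, ∀ x y, ∃ k ≤ K, δ ≤ (M ^ (k + 1)) x y := by
  have hcover : 𝓜 ⊆ ⋃ K, {M | 0 < minMaxPowApply K M} := fun M hM => by
    have : ∀ᶠ K in atTop, ∀ x y, ∃ k ≤ K, 0 < (M ^ (k + 1)) x y := by
      simp only [eventually_all]
      intro x y
      obtain ⟨k, hk₁, hk⟩ := hirr M hM x y
      exact eventually_atTop.2 ⟨k - 1, fun K hK => ⟨k - 1, hK, by rwa [Nat.sub_add_cancel hk₁]⟩⟩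
    obtain ⟨K, hK⟩ := this.exists
    exact Set.mem_iUnion.2 ⟨K, pos_minMaxPowApply_iff.2 hK⟩
  obtain ⟨K, hK⟩ := h𝓜.elim_directed_cover _
    (fun K => isOpen_lt continuous_const (continuous_minMaxPowApply K)) hcover
    (Monotone.directed_le fun _ _ h _ hM => hM.trans_le (monotone_minMaxPowApply _ h))
  rcases 𝓜.eq_empty_or_nonempty with rfl | hne
  · exact ⟨0, 1, one_pos, by simp⟩
  obtain ⟨M₀, hM₀, hmin⟩ := h𝓜.exists_isMinOn hne (continuous_minMaxPowApply K).continuousOn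
  exact ⟨K, _, hK hM₀, fun M hM => le_minMaxPowApply_iff.1 (hmin hM)⟩

end UniformHitting

lemma isCompact_setOf_forall_mem {ι κ X : Type*} [TopologicalSpace X] {U : ι → κ → Set X}
    (hU : ∀ i k, IsCompact (U i k)) : IsCompact {P : ι → κ → X | ∀ i k, P i k ∈ U i k} := by
  convert isCompact_univ_pi fun i => isCompact_univ_pi fun k => hU i k
  ext P
  simp

section VanishingDiscount

variable {S A : Type*} [Fintype S] [DecidableEq S] [Fintype A]
  {U : S → A → Set (S → ℝ)} {r : S → A → ℝ}

lemma exists_sub_le_of_robustBellman_eq_self [Nonempty S] [Nonempty A]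
    (hU : ∀ s a, IsUncertaintySet (U s a)) (hr : ∀ s a, r s a ∈ Set.Icc (0 : ℝ) 1)
    (hirr : Assump1 U) :
    ∃ C, ∀ β, 0 ≤ β → β < 1 → ∀ V, robustBellman U r β 0 V = V → ∀ s s', V s - V s' ≤ C := by
  obtain ⟨a₀⟩ := ‹Nonempty A›
  obtain ⟨K, δ, hδ, hhit⟩ := ((isCompact_setOf_forall_mem fun s a => (hU s a).2.1).image
    (f := fun P : S → A → S → ℝ => Matrix.of fun s s' => P s a₀ s') (by fun_prop)
    ).exists_forall_le_pow_apply (by rintro _ ⟨P, hP, rfl⟩; exact hirr _ P hP)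
  refine ⟨(K + 1) / δ, fun β hβ₀ hβ₁ V hV s s' => ?_⟩
  choose P hPU hPV using fun s a => exists_suppF_eq_dotProduct (hU s a) V
  set M : Matrix S S ℝ := Matrix.of fun s s' => P s a₀ s'
  have hM : M ∈ rowStochastic ℝ S :=
    mem_rowStochastic_iff_forall_mem_stdSimplex.2 fun s => (hU s a₀).2.2 (hPU s a₀)
  have hsuper : β • (M *ᵥ V) ≤ V := fun s =>
    calc β * (M *ᵥ V) s = β * suppF (U s a₀) V := by rw [hPV]; rfl
      _ ≤ r s a₀ - 0 + β * suppF (U s a₀) V := by linarith [(hr s a₀).1]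
      _ ≤ robustBellman U r β 0 V s :=
          le_ciSup (f := fun a => r s a - 0 + β * suppF (U s a) V) (Finite.bddAbove_range _) a₀
      _ = V s := congrFun hV s
  obtain ⟨y, hy⟩ := Finite.exists_min V
  obtain ⟨k, hk, hδk⟩ := hhit M ⟨P, hPU, rfl⟩ y s
  have hgain := pow_apply_mul_sub_le hM hβ₀ hβ₁.le hsuper
    (robustBellman_eq_self_bounds hU hr hβ₀ hβ₁ hV s).2 hy (k + 1)
  have hkK : ((k + 1 : ℕ) : ℝ) ≤ K + 1 := by exact_mod_cast Nat.succ_le_succ hk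
  rw [le_div_iff₀ hδ]
  nlinarith [hy s', hy s]

theorem exists_robustBellman_one_eq_self [Nonempty S] [Nonempty A]
    (hU : ∀ s a, IsUncertaintySet (U s a)) (hr : ∀ s a, r s a ∈ Set.Icc (0 : ℝ) 1)
    (hirr : Assump1 U) : ∃ g h, robustBellman U r 1 g h = h := by
  obtain ⟨C, hC⟩ := exists_sub_le_of_robustBellman_eq_self hU hr hirr
  obtain ⟨s₀⟩ := ‹Nonempty S›
  set β : ℕ → ℝ := fun n => n / (n + 1)
  have hβ₀ : ∀ n, 0 ≤ β n := fun n => by positivity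
  have hβ₁ : ∀ n, β n < 1 := fun n => (div_lt_one (by positivity)).2 (by linarith)
  choose V hV using fun n => exists_robustBellman_eq_self hU (hβ₀ n) (hβ₁ n) (r := r) 0
  set x : ℕ → ℝ × (S → ℝ) := fun n => ((1 - β n) * V n s₀, V n - fun _ => V n s₀)
  have hx : ∀ n, x n ∈ Set.Icc ((0 : ℝ), fun _ : S => -C) (1, fun _ => C) := fun n => by
    have hb := robustBellman_eq_self_bounds hU hr (hβ₀ n) (hβ₁ n) (hV n) s₀
    have hspan := hC _ (hβ₀ n) (hβ₁ n) _ (hV n)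
    refine ⟨⟨mul_nonneg (by linarith [hβ₁ n]) hb.1, fun s => ?_⟩, ⟨hb.2, fun s => ?_⟩⟩
    · linarith [hspan s₀ s, show (x n).2 s = V n s - V n s₀ from rfl]
    · linarith [hspan s s₀, show (x n).2 s = V n s - V n s₀ from rfl]
  obtain ⟨⟨g, h⟩, -, φ, hφ, hlim⟩ := isCompact_Icc.tendsto_subseq hx
  have hrel : ∀ n, robustBellman U r (β n) (x n).1 (x n).2 = (x n).2 := fun n =>
    robustBellman_sub_const_eq_self hU (hV n) _
  have hβlim : Tendsto (β ∘ φ) atTop (𝓝 1) :=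
    (tendsto_natCast_div_add_atTop 1).comp hφ.tendsto_atTop
  have hBlim := ((continuous_robustBellman hU (r := r)).tendsto (1, g, h)).comp
    (hβlim.prodMk_nhds hlim)
  refine ⟨g, h, tendsto_nhds_unique ?_ ((continuous_snd.tendsto _).comp hlim)⟩
  simpa [Function.comp_def, hrel] using hBlim

end VanishingDiscount

section CesaroAverage

variable {S : Type*} [Fintype S] [DecidableEq S] {N : Matrix S S ℝ}

lemma sum_pow_mulVec_add_pow_mulVec_le (hN : N ∈ rowStochastic ℝ S) {ρ h : S → ℝ} {g : ℝ}
    (hpois : ρ + N *ᵥ h ≤ h + fun _ => g) (m : ℕ) :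
    ∑ t ∈ Finset.range m, N ^ t *ᵥ ρ + N ^ m *ᵥ h ≤ h + fun _ => m * g := by
  induction m with
  | zero => intro s; simp
  | succ m ih =>
    have hNm := pow_mem hN m
    calc ∑ t ∈ Finset.range (m + 1), N ^ t *ᵥ ρ + N ^ (m + 1) *ᵥ h
        = ∑ t ∈ Finset.range m, N ^ t *ᵥ ρ + N ^ m *ᵥ (ρ + N *ᵥ h) := by
          rw [Finset.sum_range_succ, pow_succ, ← mulVec_mulVec, mulVec_add, add_assoc]
      _ ≤ ∑ t ∈ Finset.range m, N ^ t *ᵥ ρ + N ^ m *ᵥ (h + fun _ => g) := by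
          gcongr
          exact monotone_mulVec_of_mem_rowStochastic hNm hpois
      _ = (∑ t ∈ Finset.range m, N ^ t *ᵥ ρ + N ^ m *ᵥ h) + fun _ => g := by
          rw [mulVec_add, mulVec_const_of_mem_rowStochastic hNm, add_assoc]
      _ ≤ (h + fun _ => (m : ℝ) * g) + fun _ => g := by gcongr
      _ = h + fun _ => ((m + 1 : ℕ) : ℝ) * g := by
          ext
          simp only [Pi.add_apply, Nat.cast_succ]
          ring

lemma le_sum_pow_mulVec_add_pow_mulVec (hN : N ∈ rowStochastic ℝ S) {ρ h : S → ℝ} {g : ℝ}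
    (hpois : h + (fun _ => g) ≤ ρ + N *ᵥ h) (m : ℕ) :
    h + (fun _ => m * g) ≤ ∑ t ∈ Finset.range m, N ^ t *ᵥ ρ + N ^ m *ᵥ h := by
  have hneg := sum_pow_mulVec_add_pow_mulVec_le hN (ρ := -ρ) (h := -h) (g := -g) (fun s => by
    have := hpois s
    simp only [Pi.add_apply, Pi.neg_apply, mulVec_neg] at this ⊢
    linarith) m
  intro s
  have := hneg s
  simp only [Pi.add_apply, Pi.neg_apply, mulVec_neg, Finset.sum_neg_distrib, Finset.sum_apply,
    mul_neg] at this ⊢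
  linarith

lemma mulVec_apply_mem_Icc (hN : N ∈ rowStochastic ℝ S) {v : S → ℝ} {a b : ℝ}
    (hv : ∀ s, v s ∈ Set.Icc a b) (s : S) : (N *ᵥ v) s ∈ Set.Icc a b :=
  dotProduct_mem_Icc_of_mem_stdSimplex (mem_rowStochastic_iff_forall_mem_stdSimplex.1 hN s) hv

lemma cesaro_mem_Icc (hN : N ∈ rowStochastic ℝ S) {ρ : S → ℝ} (hρ : ∀ s, ρ s ∈ Set.Icc (0 : ℝ) 1)
    (s : S) (n : ℕ) : (∑ t ∈ Finset.range n, (N ^ t *ᵥ ρ) s) / n ∈ Set.Icc (0 : ℝ) 1 := by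
  have hterm := fun t => mulVec_apply_mem_Icc (pow_mem hN t) hρ s
  refine ⟨div_nonneg (Finset.sum_nonneg fun t _ => (hterm t).1) n.cast_nonneg,
    div_le_one_of_le₀ ?_ n.cast_nonneg⟩
  simpa using Finset.sum_le_sum fun t (_ : t ∈ Finset.range n) => (hterm t).2

lemma liminf_cesaro_le [Nonempty S] (hN : N ∈ rowStochastic ℝ S) {ρ h : S → ℝ} {g : ℝ}
    (hρ : ∀ s, ρ s ∈ Set.Icc (0 : ℝ) 1) (hpois : ρ + N *ᵥ h ≤ h + fun _ => g) (s : S) :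
    liminf (fun n : ℕ => (∑ t ∈ Finset.range n, (N ^ t *ᵥ ρ) s) / n) atTop ≤ g := by
  obtain ⟨y, hy⟩ := Finite.exists_min h
  obtain ⟨z, hz⟩ := Finite.exists_max h
  have hbound : ∀ᶠ n : ℕ in atTop,
      (∑ t ∈ Finset.range n, (N ^ t *ᵥ ρ) s) / n ≤ g + (h s - h y) / n := by
    filter_upwards [eventually_gt_atTop 0] with n hn
    have hsum := sum_pow_mulVec_add_pow_mulVec_le hN hpois n s
    have hlow := (mulVec_apply_mem_Icc (pow_mem hN n) (fun x => ⟨hy x, hz x⟩) s).1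
    simp only [Pi.add_apply, Finset.sum_apply] at hsum
    rw [div_le_iff₀ (by positivity), add_mul, div_mul_cancel₀ _ (by positivity)]
    linarith
  have hlim : Tendsto (fun n : ℕ => g + (h s - h y) / n) atTop (𝓝 g) := by
    simpa using tendsto_const_nhds.add (tendsto_const_div_atTop_nhds_zero_nat (h s - h y))
  calc liminf _ atTop ≤ liminf (fun n : ℕ => g + (h s - h y) / n) atTop :=
        liminf_le_liminf hbound
          (isBoundedUnder_of ⟨0, fun n => (cesaro_mem_Icc hN hρ s n).1⟩)
          hlim.isBoundedUnder_le.isCoboundedUnder_ge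
    _ = g := hlim.liminf_eq

lemma le_liminf_cesaro [Nonempty S] (hN : N ∈ rowStochastic ℝ S) {ρ h : S → ℝ} {g : ℝ}
    (hρ : ∀ s, ρ s ∈ Set.Icc (0 : ℝ) 1) (hpois : h + (fun _ => g) ≤ ρ + N *ᵥ h) (s : S) :
    g ≤ liminf (fun n : ℕ => (∑ t ∈ Finset.range n, (N ^ t *ᵥ ρ) s) / n) atTop := by
  obtain ⟨y, hy⟩ := Finite.exists_min h
  obtain ⟨z, hz⟩ := Finite.exists_max h
  have hbound : ∀ᶠ n : ℕ in atTop,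
      g - (h z - h s) / n ≤ (∑ t ∈ Finset.range n, (N ^ t *ᵥ ρ) s) / n := by
    filter_upwards [eventually_gt_atTop 0] with n hn
    have hsum := le_sum_pow_mulVec_add_pow_mulVec hN hpois n s
    have hupp := (mulVec_apply_mem_Icc (pow_mem hN n) (fun x => ⟨hy x, hz x⟩) s).2
    simp only [Pi.add_apply, Finset.sum_apply] at hsum
    rw [le_div_iff₀ (by positivity), sub_mul, div_mul_cancel₀ _ (by positivity)]
    linarith
  have hlim : Tendsto (fun n : ℕ => g - (h z - h s) / n) atTop (𝓝 g) := by
    simpa using tendsto_const_nhds.sub (tendsto_const_div_atTop_nhds_zero_nat (h z - h s))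
  calc g = liminf (fun n : ℕ => g - (h z - h s) / n) atTop := hlim.liminf_eq.symm
    _ ≤ liminf _ atTop :=
        liminf_le_liminf hbound hlim.isBoundedUnder_ge
          (isCoboundedUnder_ge_of_le _ fun n => (cesaro_mem_Icc hN hρ s n).2)

end CesaroAverage

lemma polRew_mem_Icc {S A : Type*} [Fintype A] {π : S → A → ℝ} {r : S → A → ℝ}
    (hπ : ∀ s, π s ∈ stdSimplex ℝ A) (hr : ∀ s a, r s a ∈ Set.Icc (0 : ℝ) 1) (s : S) :
    polRew π r s ∈ Set.Icc (0 : ℝ) 1 :=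
  dotProduct_mem_Icc_of_mem_stdSimplex (hπ s) (hr s)

lemma polRew_add_polMat_mulVec {S A : Type*} [Fintype S] [Fintype A] (π : S → A → ℝ)
    (P : S → A → S → ℝ) (r : S → A → ℝ) (h : S → ℝ) (s : S) :
    polRew π r s + (polMat π P *ᵥ h) s = π s ⬝ᵥ fun a => r s a + P s a ⬝ᵥ h := by
  simp only [polRew, polMat, mulVec, dotProduct, of_apply, mul_add, Finset.sum_add_distrib,
    Finset.mul_sum, Finset.sum_mul, mul_assoc]
  rw [Finset.sum_comm]

section Policies

variable {S A : Type*} [Fintype S] [DecidableEq S] [Fintype A] {π : S → A → ℝ}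
  {P : S → A → S → ℝ} {U : S → A → Set (S → ℝ)} {r : S → A → ℝ}

lemma polMat_mem_rowStochastic (hπ : ∀ s, π s ∈ stdSimplex ℝ A)
    (hP : ∀ s a, P s a ∈ stdSimplex ℝ S) : polMat π P ∈ rowStochastic ℝ S := by
  refine mem_rowStochastic_iff_forall_mem_stdSimplex.2 fun s => ?_
  have hrow : polMat π P s = ∑ a, π s a • P s a := by
    ext s'
    simp [polMat]
  rw [hrow]
  exact (convex_stdSimplex ℝ S).sum_mem (fun a _ => (hπ s).1 a) (hπ s).2 fun a _ => hP s a

lemma avgR_nonneg [Nonempty S] (hπ : ∀ s, π s ∈ stdSimplex ℝ A)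
    (hP : ∀ s a, P s a ∈ stdSimplex ℝ S) (hr : ∀ s a, r s a ∈ Set.Icc (0 : ℝ) 1) (s : S) :
    0 ≤ avgR π P r s :=
  le_liminf_cesaro (polMat_mem_rowStochastic hπ hP) (polRew_mem_Icc hπ hr) (h := 0)
    (fun s => by simpa using (polRew_mem_Icc hπ hr s).1) s

lemma robAvgR_le_of_forall_le [Nonempty S] (hU : ∀ s a, IsUncertaintySet (U s a))
    (hr : ∀ s a, r s a ∈ Set.Icc (0 : ℝ) 1) (hπ : ∀ s, π s ∈ stdSimplex ℝ A) {g : ℝ}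
    {h : S → ℝ} (hsub : ∀ s a, r s a - g + suppF (U s a) h ≤ h s) (s : S) :
    robAvgR U π r s ≤ g := by
  choose P hPU hPh using fun s a => exists_suppF_eq_dotProduct (hU s a) h
  have hP : ∀ s a, P s a ∈ stdSimplex ℝ S := fun s a => (hU s a).2.2 (hPU s a)
  have hpois : polRew π r + polMat π P *ᵥ h ≤ h + fun _ => g := fun s => by
    rw [Pi.add_apply, polRew_add_polMat_mulVec, Pi.add_apply,
      ← dotProduct_const_of_mem_stdSimplex (hπ s) (h s + g)]
    exact monotone_dotProduct_of_mem_stdSimplex (hπ s) fun a => by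
      linarith [hsub s a, hPh s a]
  have hbdd : BddBelow {x | ∃ P, (∀ s a, P s a ∈ U s a) ∧ x = avgR π P r s} := by
    refine ⟨0, ?_⟩
    rintro _ ⟨Q, hQ, rfl⟩
    exact avgR_nonneg hπ (fun s a => (hU s a).2.2 (hQ s a)) hr s
  exact (csInf_le hbdd ⟨P, hPU, rfl⟩).trans
    (liminf_cesaro_le (polMat_mem_rowStochastic hπ hP) (polRew_mem_Icc hπ hr) hpois s)

lemma le_robAvgR_of_forall_le [Nonempty S] [DecidableEq A] (hU : ∀ s a, IsUncertaintySet (U s a))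
    (hr : ∀ s a, r s a ∈ Set.Icc (0 : ℝ) 1) {d : S → A} {g : ℝ} {h : S → ℝ}
    (hsup : ∀ s, h s ≤ r s (d s) - g + suppF (U s (d s)) h) (s : S) :
    g ≤ robAvgR U (fun s => Pi.single (d s) 1) r s := by
  have hπ : ∀ s, Pi.single (d s) 1 ∈ stdSimplex ℝ A := fun s => single_mem_stdSimplex ℝ (d s)
  choose P₀ hP₀ using fun s a => (hU s a).1
  refine le_csInf ⟨_, P₀, hP₀, rfl⟩ ?_
  rintro _ ⟨P, hPU, rfl⟩
  refine le_liminf_cesaro (polMat_mem_rowStochastic hπ fun s a => (hU s a).2.2 (hPU s a))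
    (polRew_mem_Icc hπ hr) (h := h) (fun s => ?_) s
  rw [Pi.add_apply, Pi.add_apply, polRew_add_polMat_mulVec, single_dotProduct, one_mul]
  linarith [hsup s, suppF_le_dotProduct (hU s (d s)).2.1 (hPU s (d s)) h]

end Policies

/-- Under Assumption 1, the optimal robust average-reward Bellman
equation is solvable, and its gain component equals the optimal robust average
reward (the supremum over stationary policies of the robust average reward),
at every state. -/
theorem stmt1 {S A : Type*} [Fintype S] [DecidableEq S] [Nonempty S]
    [Fintype A] [Nonempty A]
    (r : S → A → ℝ) (hr : ∀ s a, r s a ∈ Set.Icc (0 : ℝ) 1)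
    (U : S → A → Set (S → ℝ))
    (hU : ∀ s a, (U s a).Nonempty ∧ IsCompact (U s a) ∧ Convex ℝ (U s a) ∧
      U s a ⊆ stdSimplex ℝ S)
    (hirr : Assump1 U) :
    ∃ (g : ℝ) (h : S → ℝ),
      (∀ s, h s = ⨆ a : A, (r s a - g + suppF (U s a) h)) ∧
      (∀ s, g = sSup {x | ∃ π : S → A → ℝ,
        (∀ s', π s' ∈ stdSimplex ℝ A) ∧ x = robAvgR U π r s}) := by
  classical
  have hU' : ∀ s a, IsUncertaintySet (U s a) := fun s a =>
    ⟨(hU s a).1, (hU s a).2.1, (hU s a).2.2.2⟩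
  obtain ⟨g, h, hgh⟩ := exists_robustBellman_one_eq_self hU' hr hirr
  have hBell : ∀ s, h s = ⨆ a : A, (r s a - g + suppF (U s a) h) := fun s => by
    simpa [robustBellman] using (congrFun hgh s).symm
  refine ⟨g, h, hBell, fun s => ?_⟩
  have hsub : ∀ s a, r s a - g + suppF (U s a) h ≤ h s := fun s a =>
    (hBell s).symm ▸
      le_ciSup (f := fun a => r s a - g + suppF (U s a) h) (Finite.bddAbove_range _) a
  choose d hd using fun s =>
    exists_eq_ciSup_of_finite (f := fun a => r s a - g + suppF (U s a) h)
  have hπd : ∀ s, Pi.single (d s) 1 ∈ stdSimplex ℝ A := fun s => single_mem_stdSimplex ℝ (d s)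
  have hopt : IsGreatest {x | ∃ π : S → A → ℝ,
      (∀ s', π s' ∈ stdSimplex ℝ A) ∧ x = robAvgR U π r s} g := by
    refine ⟨⟨_, hπd, le_antisymm ?_ (robAvgR_le_of_forall_le hU' hr hπd hsub s)⟩, ?_⟩
    · exact le_robAvgR_of_forall_le hU' hr (fun s => ((hd s).trans (hBell s).symm).ge) s
    · rintro _ ⟨π, hπ, rfl⟩
      exact robAvgR_le_of_forall_le hU' hr hπ hsub s
  exact hopt.csSup_eq.symm
end

section
/- Define the induced Bellman operator T^ρ by T^ρ(h)(s,a) = r^ρ(s,a) + σ_{(𝒫^ρ)^a_s}(h) for h : S → ℝ. If {ρ_n} is a sequence of opponent policies with ρ_n(b|s) → ρ(b|s) for all (s,b), and {h_n} is a sequence of vectors with h_n(s) → h(s) for all s, then T^{ρ_n}(h_n) converges to T^ρ(h) uniformly on S × A, i.e. max_{(s,a)} |T^{ρ_n}(h_n)(s,a) − T^ρ(h)(s,a)| → 0 as n → ∞. -/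
/-!
Parametrise the induced set `(𝒫^ρ)^a_s` by the product `∏_b 𝒫^{(a,b)}_s`, which does not
depend on `ρ`: then `σ_{(𝒫^ρ)^a_s}(h)` is the infimum over this fixed set of the bilinear
expression `ρ(s)ᵀ P h`. Since the rows of `P` are probability vectors, this expression is
Lipschitz in `(ρ(s), h)` uniformly in `P`, hence so is its infimum, and `T^{ρ_n}(h_n) → T^ρ(h)`
pointwise. On the finite set `S × A` pointwise convergence is uniform.
-/

open scoped BigOperators
open Matrix Filter

/-- The induced uncertainty set
`(U^ρ)^a_s = { ∑_b ρ(b|s) P_b : P_b ∈ U^{(a,b)}_s }`. -/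
def inducedSet {S A B : Type*} [Fintype B]
    (U : S → A → B → Set (S → ℝ)) (ρ : S → B → ℝ) (s : S) (a : A) :
    Set (S → ℝ) :=
  {q | ∃ Pb : B → (S → ℝ), (∀ b, Pb b ∈ U s a b) ∧
    q = fun s' => ∑ b, ρ s b * Pb b s'}

/-- The induced reward `r^ρ(s,a) = ∑_b ρ(b|s) r(s,a,b)`. -/
noncomputable def inducedRew {S A B : Type*} [Fintype B]
    (r : S → A → B → ℝ) (ρ : S → B → ℝ) : S → A → ℝ :=
  fun s a => ∑ b, ρ s b * r s a b

/-- The induced Bellman operator `T^ρ(h)(s,a) = r^ρ(s,a) + σ_{(U^ρ)^a_s}(h)`. -/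
noncomputable def indOp {S A B : Type*} [Fintype S] [Fintype B]
    (U : S → A → B → Set (S → ℝ)) (r : S → A → B → ℝ)
    (ρ : S → B → ℝ) (h : S → ℝ) (s : S) (a : A) : ℝ :=
  inducedRew r ρ s a + suppF (inducedSet U ρ s a) h

section Bounds

variable {ι κ : Type*} [Fintype ι] [Fintype κ]

theorem abs_dotProduct_le_of_mem_stdSimplex {p : ι → ℝ} (hp : p ∈ stdSimplex ℝ ι)
    (g : ι → ℝ) : |p ⬝ᵥ g| ≤ ∑ i, |g i| := by
  refine (Finset.abs_sum_le_sum_abs _ _).trans (Finset.sum_le_sum fun i _ => ?_)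
  obtain ⟨hp0, hp1⟩ := mem_Icc_of_mem_stdSimplex hp i
  rw [abs_mul, abs_of_nonneg hp0]
  exact mul_le_of_le_one_left (abs_nonneg _) hp1

theorem abs_dotProduct_mulVec_le {P : Matrix κ ι ℝ} (hP : ∀ k, P k ∈ stdSimplex ℝ ι)
    (σ : κ → ℝ) (g : ι → ℝ) : |σ ⬝ᵥ (P *ᵥ g)| ≤ (∑ k, |σ k|) * ∑ i, |g i| := by
  rw [Finset.sum_mul]
  refine (Finset.abs_sum_le_sum_abs _ _).trans (Finset.sum_le_sum fun k _ => ?_)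
  rw [abs_mul]
  exact mul_le_mul_of_nonneg_left (abs_dotProduct_le_of_mem_stdSimplex (hP k) g)
    (abs_nonneg _)

theorem abs_dotProduct_mulVec_sub_le {P : Matrix κ ι ℝ} (hP : ∀ k, P k ∈ stdSimplex ℝ ι)
    (σ₁ σ₂ : κ → ℝ) (g₁ g₂ : ι → ℝ) :
    |σ₁ ⬝ᵥ (P *ᵥ g₁) - σ₂ ⬝ᵥ (P *ᵥ g₂)| ≤
      (∑ k, |σ₁ k - σ₂ k|) * (∑ i, |g₁ i|) + (∑ k, |σ₂ k|) * ∑ i, |g₁ i - g₂ i| := by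
  have hsplit : σ₁ ⬝ᵥ (P *ᵥ g₁) - σ₂ ⬝ᵥ (P *ᵥ g₂) =
      (σ₁ - σ₂) ⬝ᵥ (P *ᵥ g₁) + σ₂ ⬝ᵥ (P *ᵥ (g₁ - g₂)) := by
    rw [sub_dotProduct, mulVec_sub, dotProduct_sub]
    ring
  rw [hsplit]
  exact (abs_add_le _ _).trans
    (add_le_add (abs_dotProduct_mulVec_le hP _ _) (abs_dotProduct_mulVec_le hP _ _))

end Bounds

theorem abs_csInf_image_sub_csInf_image_le {X : Type*} {K : Set X} (hK : K.Nonempty)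
    {F₁ F₂ : X → ℝ} (hb₁ : BddBelow (F₁ '' K)) (hb₂ : BddBelow (F₂ '' K))
    {ε : ℝ} (hε : ∀ x ∈ K, |F₁ x - F₂ x| ≤ ε) :
    |sInf (F₁ '' K) - sInf (F₂ '' K)| ≤ ε := by
  have hle : ∀ G₁ G₂ : X → ℝ, BddBelow (G₁ '' K) → (∀ x ∈ K, G₁ x - G₂ x ≤ ε) →
      sInf (G₁ '' K) - ε ≤ sInf (G₂ '' K) := by
    intro G₁ G₂ hb hG
    refine le_csInf (hK.image _) ?_
    rintro _ ⟨x, hx, rfl⟩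
    linarith [csInf_le hb ⟨x, hx, rfl⟩, hG x hx]
  rw [abs_sub_le_iff]
  constructor
  · linarith [hle F₁ F₂ hb₁ fun x hx => (abs_le.1 (hε x hx)).2]
  · linarith [hle F₂ F₁ hb₂ fun x hx => by linarith [(abs_le.1 (hε x hx)).1]]

section Convergence

variable {α ι : Type*} [Fintype ι] {l : Filter α} {f : α → ι → ℝ} {g : ι → ℝ}

theorem tendsto_sum_abs_sub_zero (hf : ∀ i, Tendsto (fun n => f n i) l (nhds (g i))) :
    Tendsto (fun n => ∑ i, |f n i - g i|) l (nhds 0) := by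
  simpa using tendsto_finsetSum Finset.univ fun i _ => ((hf i).sub_const (g i)).abs

theorem tendsto_iSup_abs_sub_zero (hf : ∀ i, Tendsto (fun n => f n i) l (nhds (g i))) :
    Tendsto (fun n => ⨆ i, |f n i - g i|) l (nhds 0) :=
  squeeze_zero (fun _ => Real.iSup_nonneg fun _ => abs_nonneg _)
    (fun n => Real.iSup_le
      (fun i => Finset.single_le_sum (f := fun i => |f n i - g i|)
        (fun _ _ => abs_nonneg _) (Finset.mem_univ i))
      (Finset.sum_nonneg fun _ _ => abs_nonneg _))
    (tendsto_sum_abs_sub_zero hf)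

end Convergence

theorem tendsto_inducedRew {S A B α : Type*} [Fintype B] {l : Filter α}
    {ρs : α → S → B → ℝ} {ρ : S → B → ℝ}
    (hρ : ∀ s b, Tendsto (fun n => ρs n s b) l (nhds (ρ s b))) (r : S → A → B → ℝ) (s : S)
    (a : A) : Tendsto (fun n => inducedRew r (ρs n) s a) l (nhds (inducedRew r ρ s a)) :=
  tendsto_finsetSum _ fun b _ => (hρ s b).mul_const _

section InducedOperator

variable {S A B : Type*} [Fintype S] [Fintype B]

theorem suppF_inducedSet (U : S → A → B → Set (S → ℝ)) (ρ : S → B → ℝ) (s : S) (a : A)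
    (h : S → ℝ) :
    suppF (inducedSet U ρ s a) h =
      sInf ((fun P : Matrix B S ℝ => ρ s ⬝ᵥ (P *ᵥ h)) '' Set.univ.pi (U s a)) := by
  have hval : ∀ P : Matrix B S ℝ,
      ∑ s', (∑ b, ρ s b * P b s') * h s' = ρ s ⬝ᵥ (P *ᵥ h) := fun P => by
    rw [dotProduct_mulVec]; rfl
  unfold suppF inducedSet
  congr 1
  ext y
  constructor
  · rintro ⟨_, ⟨P, hP, rfl⟩, rfl⟩
    exact ⟨P, Set.mem_univ_pi.2 hP, (hval P).symm⟩
  · rintro ⟨P, hP, rfl⟩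
    exact ⟨_, ⟨P, Set.mem_univ_pi.1 hP, rfl⟩, hval P⟩

variable {U : S → A → B → Set (S → ℝ)} {s : S} {a : A}

theorem abs_suppF_inducedSet_sub_le (hne : ∀ b, (U s a b).Nonempty)
    (hsub : ∀ b, U s a b ⊆ stdSimplex ℝ S) (ρ₁ ρ₂ : S → B → ℝ) (h₁ h₂ : S → ℝ) :
    |suppF (inducedSet U ρ₁ s a) h₁ - suppF (inducedSet U ρ₂ s a) h₂| ≤
      (∑ b, |ρ₁ s b - ρ₂ s b|) * (∑ s', |h₁ s'|) +
        (∑ b, |ρ₂ s b|) * ∑ s', |h₁ s' - h₂ s'| := by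
  have hrows : ∀ P ∈ Set.univ.pi (U s a), ∀ b, P b ∈ stdSimplex ℝ S :=
    fun P hP b => hsub b (hP b trivial)
  have hbdd : ∀ σ g, BddBelow
      ((fun P : Matrix B S ℝ => σ ⬝ᵥ (P *ᵥ g)) '' Set.univ.pi (U s a)) := fun σ g =>
    ⟨_, by
      rintro _ ⟨P, hP, rfl⟩
      exact neg_le_of_abs_le (abs_dotProduct_mulVec_le (hrows P hP) σ g)⟩
  rw [suppF_inducedSet, suppF_inducedSet]
  exact abs_csInf_image_sub_csInf_image_le (Set.univ_pi_nonempty_iff.2 hne) (hbdd _ _)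
    (hbdd _ _) fun P hP => abs_dotProduct_mulVec_sub_le (hrows P hP) _ _ _ _

variable {α : Type*} {l : Filter α} {ρs : α → S → B → ℝ} {ρ : S → B → ℝ}
  {hs : α → S → ℝ} {h : S → ℝ}

theorem tendsto_suppF_inducedSet (hne : ∀ b, (U s a b).Nonempty)
    (hsub : ∀ b, U s a b ⊆ stdSimplex ℝ S)
    (hρ : ∀ s b, Tendsto (fun n => ρs n s b) l (nhds (ρ s b)))
    (hh : ∀ s, Tendsto (fun n => hs n s) l (nhds (h s))) :
    Tendsto (fun n => suppF (inducedSet U (ρs n) s a) (hs n)) l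
      (nhds (suppF (inducedSet U ρ s a) h)) := by
  have hbound : Tendsto (fun n => (∑ b, |ρs n s b - ρ s b|) * (∑ s', |hs n s'|) +
      (∑ b, |ρ s b|) * ∑ s', |hs n s' - h s'|) l (nhds 0) := by
    simpa using ((tendsto_sum_abs_sub_zero (hρ s)).mul
      (tendsto_finsetSum _ fun s' _ => (hh s').abs)).add
      (tendsto_const_nhds.mul (tendsto_sum_abs_sub_zero hh))
  exact tendsto_iff_norm_sub_tendsto_zero.2 (squeeze_zero (fun _ => norm_nonneg _)
    (fun n => abs_suppF_inducedSet_sub_le hne hsub _ _ _ _) hbound)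

theorem tendsto_indOp (hne : ∀ b, (U s a b).Nonempty) (hsub : ∀ b, U s a b ⊆ stdSimplex ℝ S)
    (hρ : ∀ s b, Tendsto (fun n => ρs n s b) l (nhds (ρ s b)))
    (hh : ∀ s, Tendsto (fun n => hs n s) l (nhds (h s))) (r : S → A → B → ℝ) :
    Tendsto (fun n => indOp U r (ρs n) (hs n) s a) l (nhds (indOp U r ρ h s a)) :=
  (tendsto_inducedRew hρ r s a).add (tendsto_suppF_inducedSet hne hsub hρ hh)

end InducedOperator

theorem stmt8_general {S A B : Type*} [Fintype S]
    [Fintype A] [Fintype B]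
    (U : S → A → B → Set (S → ℝ))
    (hU : ∀ s a b, (U s a b).Nonempty ∧ IsCompact (U s a b) ∧
      U s a b ⊆ stdSimplex ℝ S)
    (r : S → A → B → ℝ)
    (ρseq : ℕ → S → B → ℝ) (ρ : S → B → ℝ)
    (hρconv : ∀ s b, Filter.Tendsto (fun n => ρseq n s b) Filter.atTop (nhds (ρ s b)))
    (hseq : ℕ → S → ℝ) (h : S → ℝ)
    (hhconv : ∀ s, Filter.Tendsto (fun n => hseq n s) Filter.atTop (nhds (h s))) :
    Filter.Tendsto
      (fun n => ⨆ p : S × A, |indOp U r (ρseq n) (hseq n) p.1 p.2 - indOp U r ρ h p.1 p.2|)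
      Filter.atTop (nhds 0) :=
  tendsto_iSup_abs_sub_zero fun p => tendsto_indOp (fun b => (hU p.1 p.2 b).1)
    (fun b => (hU p.1 p.2 b).2.2) hρconv hhconv r

/-- If `ρ_n → ρ` pointwise and `h_n → h` pointwise, then
`T^{ρ_n}(h_n) → T^ρ(h)` uniformly on `S × A`. -/
theorem stmt8 {S A B : Type*} [Fintype S] [DecidableEq S] [Nonempty S]
    [Fintype A] [Nonempty A] [Fintype B] [Nonempty B]
    (U : S → A → B → Set (S → ℝ))
    (hU : ∀ s a b, (U s a b).Nonempty ∧ IsCompact (U s a b) ∧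
      U s a b ⊆ stdSimplex ℝ S)
    (r : S → A → B → ℝ) (hr : ∀ s a b, r s a b ∈ Set.Icc (0 : ℝ) 1)
    (ρseq : ℕ → S → B → ℝ) (ρ : S → B → ℝ)
    (hρseq : ∀ n s, ρseq n s ∈ stdSimplex ℝ B) (hρ : ∀ s, ρ s ∈ stdSimplex ℝ B)
    (hρconv : ∀ s b, Filter.Tendsto (fun n => ρseq n s b) Filter.atTop (nhds (ρ s b)))
    (hseq : ℕ → S → ℝ) (h : S → ℝ)
    (hhconv : ∀ s, Filter.Tendsto (fun n => hseq n s) Filter.atTop (nhds (h s))) :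
    Filter.Tendsto
      (fun n => ⨆ p : S × A, |indOp U r (ρseq n) (hseq n) p.1 p.2 - indOp U r ρ h p.1 p.2|)
      Filter.atTop (nhds 0) :=
  stmt8_general U hU r ρseq ρ hρconv hseq h hhconv
end

section
/- (Semi-continuity of best responses.) Assume that for every deterministic joint policy d : S → A × B and every kernel P (a choice of P^{(a,b)}_s ∈ 𝒫^{(a,b)}_s for all (s,a,b)) the stochastic matrix with rows (P^{d(s)}_s)_{s∈S} is irreducible. Let {ρ_n} be opponent policies with ρ_n(b|s) → ρ(b|s) for all (s,b), and {μ_n} agent policies with μ_n(a|s) → μ(a|s) for all (s,a). If for every n the policy μ_n is optimal for the induced robust MDP (S, A, 𝒫^{ρ_n}, r^{ρ_n}), i.e. g^{μ_n}_{𝒫^{ρ_n}}(s) = sup_ν g^{ν}_{𝒫^{ρ_n}}(s) for all s, then μ is optimal for the induced robust MDP (S, A, 𝒫^{ρ}, r^{ρ}), i.e. g^{μ}_{𝒫^{ρ}}(s) = sup_ν g^{ν}_{𝒫^{ρ}}(s) for all s. -/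
open scoped BigOperators
open Matrix Filter

/-!
Every kernel in the uncertainty sets, together with an agent policy `ν` and an opponent policy
`ρ`, gives a stochastic matrix `P^{ν,ρ}` which is irreducible: it charges every transition of
the deterministic kernel obtained by picking actions of positive probability. For an irreducible
chain the Poisson equation is solvable, so the Cesàro averages of the rewards converge to
`π ⬝ᵥ r^{ν,ρ}` for the unique stationary distribution `π`, whatever the initial state. Since
`π` is unique and the simplex is compact, `π` depends continuously on the irreducible matrix,
so the gain is jointly continuous in `(ν, ρ, P)`. An infimum over the compact set of kernels and
then a supremum over the compact set of policies preserve continuity. Hence both sides of the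
optimality identity for `(μ_n, ρ_n)` converge to the corresponding sides for `(μ, ρ)`.
-/

open Finset Topology

section Compact

variable {α β γ : Type*} [ConditionallyCompleteLinearOrder α] [TopologicalSpace α]
  [OrderTopology α] [TopologicalSpace β] [TopologicalSpace γ]

theorem IsCompact.continuousOn_sSup {f : γ → β → α} {s : Set γ} {K : Set β} (hK : IsCompact K)
    (hf : ContinuousOn ↿f (s ×ˢ K)) : ContinuousOn (fun x => sSup (f x '' K)) s := by
  rw [continuousOn_iff_continuous_domRestrict]
  have : CompactSpace K := isCompact_iff_compactSpace.1 hK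
  convert isCompact_univ.continuous_sSup (f := fun (x : s) (y : K) => f x y)
    (hf.comp_continuous (continuous_subtype_val.prodMap continuous_subtype_val)
      fun p => ⟨p.1.2, p.2.2⟩) using 2 with x
  rw [Set.image_univ, Set.domRestrict_apply, Set.image_eq_range]

theorem IsCompact.continuousOn_sInf {f : γ → β → α} {s : Set γ} {K : Set β} (hK : IsCompact K)
    (hf : ContinuousOn ↿f (s ×ˢ K)) : ContinuousOn (fun x => sInf (f x '' K)) s :=
  IsCompact.continuousOn_sSup (α := αᵒᵈ) hK hf

end Compact

theorem exists_pos_of_mem_stdSimplex {ι : Type*} [Fintype ι] {w : ι → ℝ}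
    (hw : w ∈ stdSimplex ℝ ι) : ∃ i, 0 < w i := by
  by_contra! h
  have := hw.2 ▸ Finset.sum_nonpos fun i (_ : i ∈ univ) => h i
  norm_num at this

theorem sum_smul_mem_stdSimplex {ι κ : Type*} [Fintype ι] [Fintype κ] {w : κ → ℝ}
    (hw : w ∈ stdSimplex ℝ κ) {x : κ → ι → ℝ} (hx : ∀ k, x k ∈ stdSimplex ℝ ι) :
    ∑ k, w k • x k ∈ stdSimplex ℝ ι :=
  (convex_stdSimplex ℝ ι).sum_mem (fun k _ => hw.1 k) hw.2 fun k _ => hx k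

section Markov

variable {S : Type*} [Fintype S] [DecidableEq S]

theorem Matrix.mem_rowStochastic_of_rows {M : Matrix S S ℝ} (hM : ∀ s, M s ∈ stdSimplex ℝ S) :
    M ∈ rowStochastic ℝ S :=
  mem_rowStochastic_iff_sum.2 ⟨fun s => (hM s).1, fun s => (hM s).2⟩

theorem Matrix.pow_apply_pos_of_pos {M N : Matrix S S ℝ} (hM : M ∈ rowStochastic ℝ S)
    (hN : N ∈ rowStochastic ℝ S) (hMN : ∀ i j, 0 < M i j → 0 < N i j) (k : ℕ) (i j : S)
    (hk : 0 < (M ^ k) i j) : 0 < (N ^ k) i j := by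
  induction k generalizing j with
  | zero => simpa [one_apply] using hk
  | succ k ih =>
    rw [pow_succ, mul_apply] at hk ⊢
    obtain ⟨l, -, hl⟩ := exists_lt_of_sum_lt (s := univ) (f := fun _ => (0 : ℝ)) (by simpa using hk)
    have hMk := pow_mem hM k
    have hNk := pow_mem hN k
    refine sum_pos' (fun l _ => mul_nonneg (hNk.1 i l) (hN.1 l j)) ⟨l, mem_univ _, ?_⟩
    exact mul_pos (ih l (pos_of_mul_pos_left hl (hM.1 l j)))
      (hMN l j (pos_of_mul_pos_right hl (hMk.1 i l)))

theorem IrredM.of_pos_imp_pos {M N : Matrix S S ℝ} (hM : M ∈ rowStochastic ℝ S)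
    (hN : N ∈ rowStochastic ℝ S) (hMN : ∀ i j, 0 < M i j → 0 < N i j) (hirr : IrredM M) :
    IrredM N := fun i j =>
  let ⟨k, hk, hpos⟩ := hirr i j
  ⟨k, hk, pow_apply_pos_of_pos hM hN hMN k i j hpos⟩

theorem Matrix.exists_stationary [Nonempty S] {M : Matrix S S ℝ} (hM : M ∈ rowStochastic ℝ S) :
    ∃ p ∈ stdSimplex ℝ S, p ᵥ* M = p := by
  obtain ⟨v, hv0, hv⟩ : ∃ v ≠ 0, v ᵥ* (1 - M) = 0 := by
    rw [exists_vecMul_eq_zero_iff, ← exists_mulVec_eq_zero_iff]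
    exact ⟨1, one_ne_zero, by rw [sub_mulVec, one_mulVec, hM.2, sub_self]⟩
  rw [vecMul_sub, vecMul_one, sub_eq_zero] at hv
  -- `|v|` is subinvariant and has the same mass as its image, hence is invariant
  set q : S → ℝ := fun s => |v s|
  have hle : ∀ s ∈ univ, q s ≤ (q ᵥ* M) s := fun s _ =>
    calc q s = |(v ᵥ* M) s| := by rw [← hv]
      _ ≤ ∑ i, |v i * M i s| := abs_sum_le_sum_abs _ _
      _ = (q ᵥ* M) s := by simp [q, vecMul, dotProduct, abs_mul, abs_of_nonneg (hM.1 _ _)]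
  have hmass : ∑ s, q s = ∑ s, (q ᵥ* M) s := by
    simp only [vecMul, dotProduct]
    rw [sum_comm]
    simp [← mul_sum, sum_row_of_mem_rowStochastic hM]
  have hq : q ᵥ* M = q := funext fun s => ((sum_eq_sum_iff_of_le hle).1 hmass s (mem_univ s)).symm
  have hpos : 0 < ∑ s, q s := by
    obtain ⟨s, hs⟩ := Function.ne_iff.1 hv0
    exact sum_pos' (fun i _ => abs_nonneg _) ⟨s, mem_univ s, abs_pos.2 hs⟩
  refine ⟨(∑ s, q s)⁻¹ • q, ⟨fun s => mul_nonneg (inv_nonneg.2 hpos.le) (abs_nonneg _), ?_⟩,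
    by rw [smul_vecMul, hq]⟩
  simp [← mul_sum, hpos.ne']

theorem IrredM.apply_eq_of_mulVec_eq [Nonempty S] {M : Matrix S S ℝ}
    (hM : M ∈ rowStochastic ℝ S) (hirr : IrredM M) {h : S → ℝ} (hfix : M *ᵥ h = h)
    (s s' : S) : h s = h s' := by
  obtain ⟨s₀, -, hmax⟩ := exists_max_image univ h univ_nonempty
  have hfix_pow : ∀ k, (M ^ k) *ᵥ h = h := by
    intro k
    induction k with
    | zero => simp
    | succ n ih => rw [pow_succ, ← mulVec_mulVec, hfix, ih]
  -- the maximum of `h` propagates along every positive entry of the powers of `M`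
  suffices ∀ s, h s = h s₀ by rw [this s, this s']
  intro s
  obtain ⟨k, -, hk⟩ := hirr s₀ s
  have hMk := pow_mem hM k
  have hzero : ∑ i, (M ^ k) s₀ i * (h s₀ - h i) = 0 := by
    simp only [mul_sub, sum_sub_distrib, ← sum_mul, sum_row_of_mem_rowStochastic hMk, one_mul]
    exact sub_eq_zero.2 (congrFun (hfix_pow k) s₀).symm
  have hterm := (sum_eq_zero_iff_of_nonneg fun i _ =>
    mul_nonneg (hMk.1 s₀ i) (sub_nonneg.2 (hmax i (mem_univ i)))).1 hzero s (mem_univ s)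
  linarith [(mul_eq_zero.1 hterm).resolve_left hk.ne']

theorem IrredM.ker_mulVecLin_one_sub [Nonempty S] {M : Matrix S S ℝ}
    (hM : M ∈ rowStochastic ℝ S) (hirr : IrredM M) :
    LinearMap.ker (1 - M).mulVecLin = ℝ ∙ (1 : S → ℝ) := by
  apply le_antisymm
  · intro h hh
    rw [LinearMap.mem_ker, mulVecLin_apply, sub_mulVec, one_mulVec, sub_eq_zero, eq_comm] at hh
    exact Submodule.mem_span_singleton.2 ⟨h (Classical.arbitrary S), funext fun s => by
      simp [hirr.apply_eq_of_mulVec_eq hM hh s (Classical.arbitrary S)]⟩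
  · rw [Submodule.span_le, Set.singleton_subset_iff, SetLike.mem_coe, LinearMap.mem_ker,
      mulVecLin_apply, sub_mulVec, one_mulVec, hM.2, sub_self]

theorem IrredM.exists_poisson [Nonempty S] {M : Matrix S S ℝ} (hM : M ∈ rowStochastic ℝ S)
    (hirr : IrredM M) {π : S → ℝ} (hπ : π ∈ stdSimplex ℝ S) (hπM : π ᵥ* M = π) (r : S → ℝ) :
    ∃ h : S → ℝ, r - (π ⬝ᵥ r) • 1 = h - M *ᵥ h := by
  set φ : (S → ℝ) →ₗ[ℝ] ℝ := dotProductBilin ℝ ℝ π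
  have hφ : ∀ v, φ v = π ⬝ᵥ v := fun v => rfl
  have hπ1 : π ⬝ᵥ 1 = 1 := by rw [dotProduct_one, hπ.2]
  -- both spaces have codimension one, since the kernel of `1 - M` is the constants
  have hrange : LinearMap.range (1 - M).mulVecLin = LinearMap.ker φ := by
    refine Submodule.eq_of_le_of_finrank_eq ?_ ?_
    · rintro _ ⟨h, rfl⟩
      rw [LinearMap.mem_ker, hφ, mulVecLin_apply, dotProduct_mulVec, vecMul_sub, vecMul_one,
        hπM, sub_self, zero_dotProduct]
    · have h1 := LinearMap.finrank_range_add_finrank_ker (1 - M).mulVecLin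
      have h2 := LinearMap.finrank_range_add_finrank_ker φ
      rw [hirr.ker_mulVecLin_one_sub hM, finrank_span_singleton one_ne_zero] at h1
      rw [LinearMap.range_eq_top.2 fun x => ⟨x • 1, by rw [map_smul, hφ, hπ1, smul_eq_mul,
        mul_one]⟩, finrank_top, Module.finrank_self] at h2
      omega
  obtain ⟨h, hh⟩ : r - (π ⬝ᵥ r) • 1 ∈ LinearMap.range (1 - M).mulVecLin := by
    rw [hrange, LinearMap.mem_ker, hφ, dotProduct_sub, dotProduct_smul, hπ1, smul_eq_mul,
      mul_one, sub_self]
  exact ⟨h, by rw [← hh, mulVecLin_apply, sub_mulVec, one_mulVec]⟩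

theorem IrredM.eq_of_stationary [Nonempty S] {M : Matrix S S ℝ} (hM : M ∈ rowStochastic ℝ S)
    (hirr : IrredM M) {π q : S → ℝ} (hπ : π ∈ stdSimplex ℝ S) (hπM : π ᵥ* M = π)
    (hq : q ∈ stdSimplex ℝ S) (hqM : q ᵥ* M = q) : q = π := by
  funext s
  obtain ⟨h, hh⟩ := hirr.exists_poisson hM hπ hπM (Pi.single s 1)
  have := congrArg (q ⬝ᵥ ·) hh
  simpa [dotProduct_sub, dotProduct_smul, dotProduct_mulVec, hqM, dotProduct_one, hq.2,
    sub_eq_zero] using this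

noncomputable def Matrix.stationaryDist (M : Matrix S S ℝ) : S → ℝ :=
  Classical.epsilon fun p => p ∈ stdSimplex ℝ S ∧ p ᵥ* M = p

theorem Matrix.stationaryDist_spec [Nonempty S] {M : Matrix S S ℝ} (hM : M ∈ rowStochastic ℝ S) :
    stationaryDist M ∈ stdSimplex ℝ S ∧ stationaryDist M ᵥ* M = stationaryDist M :=
  Classical.epsilon_spec (p := fun p => p ∈ stdSimplex ℝ S ∧ p ᵥ* M = p)
    (let ⟨p, hp, hpM⟩ := exists_stationary hM; ⟨p, hp, hpM⟩)

theorem IrredM.eq_stationaryDist [Nonempty S] {M : Matrix S S ℝ} (hM : M ∈ rowStochastic ℝ S)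
    (hirr : IrredM M) {q : S → ℝ} (hq : q ∈ stdSimplex ℝ S) (hqM : q ᵥ* M = q) :
    q = stationaryDist M :=
  hirr.eq_of_stationary hM (stationaryDist_spec hM).1 (stationaryDist_spec hM).2 hq hqM

theorem Matrix.abs_mulVec_apply_le_norm {M : Matrix S S ℝ} (hM : M ∈ rowStochastic ℝ S) (h : S → ℝ)
    (s : S) : |(M *ᵥ h) s| ≤ ‖h‖ :=
  calc |(M *ᵥ h) s| ≤ ∑ i, |M s i * h i| := abs_sum_le_sum_abs _ _
    _ ≤ ∑ i, M s i * ‖h‖ := sum_le_sum fun i _ => by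
      rw [abs_mul, abs_of_nonneg (hM.1 s i), ← Real.norm_eq_abs]
      exact mul_le_mul_of_nonneg_left (norm_le_pi_norm h i) (hM.1 s i)
    _ = ‖h‖ := by rw [← sum_mul, sum_row_of_mem_rowStochastic hM, one_mul]

theorem IrredM.tendsto_cesaro [Nonempty S] {M : Matrix S S ℝ} (hM : M ∈ rowStochastic ℝ S)
    (hirr : IrredM M) (r : S → ℝ) (s : S) :
    Tendsto (fun n : ℕ => (∑ t ∈ range n, ((M ^ t) *ᵥ r) s) / n) atTop
      (𝓝 (stationaryDist M ⬝ᵥ r)) := by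
  obtain ⟨h, hh⟩ := hirr.exists_poisson hM (stationaryDist_spec hM).1 (stationaryDist_spec hM).2 r
  set g := stationaryDist M ⬝ᵥ r
  have hstep : ∀ t, ((M ^ t) *ᵥ r) s = g + (((M ^ t) *ᵥ h) s - ((M ^ (t + 1)) *ᵥ h) s) := by
    intro t
    rw [show r = g • 1 + (h - M *ᵥ h) by rw [← hh]; abel, mulVec_add, mulVec_smul,
      (pow_mem hM t).2, mulVec_sub, mulVec_mulVec, ← pow_succ]
    simp
  have hsum : ∀ n : ℕ, ∑ t ∈ range n, ((M ^ t) *ᵥ r) s = n * g + (h s - ((M ^ n) *ᵥ h) s) := by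
    intro n
    simp only [hstep, sum_add_distrib, sum_const, card_range, nsmul_eq_mul,
      sum_range_sub' (fun t => ((M ^ t) *ᵥ h) s), pow_zero, one_mulVec]
  have herr : Tendsto (fun n : ℕ => (h s - ((M ^ n) *ᵥ h) s) / n) atTop (𝓝 0) := by
    refine squeeze_zero_norm (fun n => ?_) (tendsto_const_div_atTop_nhds_zero_nat (2 * ‖h‖))
    rw [norm_div, Real.norm_natCast]
    gcongr
    calc ‖h s - ((M ^ n) *ᵥ h) s‖ ≤ |h s| + |((M ^ n) *ᵥ h) s| := abs_sub _ _
      _ ≤ ‖h‖ + ‖h‖ :=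
        add_le_add (norm_le_pi_norm h s) (abs_mulVec_apply_le_norm (pow_mem hM n) h s)
      _ = 2 * ‖h‖ := by ring
  have hlim := (tendsto_const_nhds (x := g)).add herr
  rw [add_zero] at hlim
  refine hlim.congr' ?_
  filter_upwards [eventually_ne_atTop 0] with n hn
  rw [hsum]
  field_simp

theorem Matrix.continuousOn_stationaryDist [Nonempty S] :
    ContinuousOn stationaryDist {M : Matrix S S ℝ | M ∈ rowStochastic ℝ S ∧ IrredM M} := by
  rintro M ⟨hM, hirr⟩
  have hclosed : IsClosed {x : Matrix S S ℝ × (S → ℝ) | x.2 ᵥ* x.1 = x.2} :=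
    isClosed_eq (continuous_snd.matrix_vecMul continuous_fst) continuous_snd
  refine (isCompact_stdSimplex ℝ S).tendsto_nhds_of_unique_mapClusterPt
    (eventually_nhdsWithin_of_forall fun N hN => (stationaryDist_spec hN.1).1) ?_
  intro q hq hcluster
  -- every cluster value is a stationary distribution of `M`, hence equals `stationaryDist M`
  have hgraph : MapClusterPt (M, q) (𝓝[{M | M ∈ rowStochastic ℝ S ∧ IrredM M}] M)
      fun N => (N, stationaryDist N) := by
    rw [((𝓝 M).basis_sets.prod_nhds (𝓝 q).basis_sets).mapClusterPt_iff_frequently]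
    rintro ⟨U, V⟩ ⟨hU, hV⟩
    exact ((mapClusterPt_iff_frequently.1 hcluster V hV).and_eventually
      (mem_nhdsWithin_of_mem_nhds hU)).mono fun N hN => ⟨hN.2, hN.1⟩
  exact hirr.eq_stationaryDist hM hq (hclosed.mem_of_mapClusterPt hgraph
    (eventually_nhdsWithin_of_forall fun N hN => (stationaryDist_spec hN.1).2))

end Markov

section RobustGame

variable {S A B : Type*}

def policySet (S A : Type*) [Fintype A] : Set (S → A → ℝ) :=
  {ν | ∀ s, ν s ∈ stdSimplex ℝ A}

theorem isCompact_policySet [Fintype A] : IsCompact (policySet S A) := by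
  simpa [policySet, Set.pi] using isCompact_univ_pi fun _ : S => isCompact_stdSimplex ℝ A

def kernelSet (U : S → A → B → Set (S → ℝ)) : Set (S → A → B → S → ℝ) :=
  {P | ∀ s a b, P s a b ∈ U s a b}

theorem isCompact_kernelSet {U : S → A → B → Set (S → ℝ)} (hU : ∀ s a b, IsCompact (U s a b)) :
    IsCompact (kernelSet U) := by
  simpa [kernelSet, Set.pi] using
    isCompact_univ_pi fun s => isCompact_univ_pi fun a => isCompact_univ_pi fun b => hU s a b

def mixedKernel [Fintype B] (ρ : S → B → ℝ) (P : S → A → B → S → ℝ) : S → A → S → ℝ :=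
  fun s a s' => ∑ b, ρ s b * P s a b s'

theorem setOf_forall_mem_inducedSet [Fintype B] (U : S → A → B → Set (S → ℝ)) (ρ : S → B → ℝ) :
    {Q | ∀ s a, Q s a ∈ inducedSet U ρ s a} = mixedKernel ρ '' kernelSet U := by
  ext Q
  constructor
  · intro hQ
    choose P hP hQP using hQ
    exact ⟨P, hP, funext fun s => funext fun a => (hQP s a).symm⟩
  · rintro ⟨P, hP, rfl⟩ s a
    exact ⟨P s a, hP s a, rfl⟩

theorem mixedKernel_mem_stdSimplex [Fintype S] [Fintype B] {ρ : S → B → ℝ}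
    (hρ : ρ ∈ policySet S B) {P : S → A → B → S → ℝ} (hP : ∀ s a b, P s a b ∈ stdSimplex ℝ S)
    (s : S) (a : A) : mixedKernel ρ P s a ∈ stdSimplex ℝ S := by
  convert sum_smul_mem_stdSimplex (hρ s) (hP s a) using 1
  ext s'
  simp [mixedKernel]

theorem polMat_mem_rowStochastic_s9 [Fintype S] [DecidableEq S] [Fintype A] {ν : S → A → ℝ}
    (hν : ν ∈ policySet S A) {Q : S → A → S → ℝ} (hQ : ∀ s a, Q s a ∈ stdSimplex ℝ S) :
    polMat ν Q ∈ rowStochastic ℝ S :=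
  mem_rowStochastic_of_rows fun s => by
    convert sum_smul_mem_stdSimplex (hν s) (hQ s) using 1
    ext s'
    simp [polMat]

theorem irredM_polMat_mixedKernel [Fintype S] [DecidableEq S] [Fintype A] [Fintype B]
    {U : S → A → B → Set (S → ℝ)} (hUS : ∀ s a b, U s a b ⊆ stdSimplex ℝ S)
    (hirr : Assump1 fun s (ab : A × B) => U s ab.1 ab.2) {ν : S → A → ℝ} (hν : ν ∈ policySet S A)
    {ρ : S → B → ℝ} (hρ : ρ ∈ policySet S B) {P : S → A → B → S → ℝ} (hP : P ∈ kernelSet U) :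
    IrredM (polMat ν (mixedKernel ρ P)) := by
  have hPS s a b : P s a b ∈ stdSimplex ℝ S := hUS s a b (hP s a b)
  choose a ha using fun s => exists_pos_of_mem_stdSimplex (hν s)
  choose b hb using fun s => exists_pos_of_mem_stdSimplex (hρ s)
  -- `P^ν` charges every transition of the deterministic kernel `s ↦ P s (a s) (b s)`
  refine IrredM.of_pos_imp_pos (mem_rowStochastic_of_rows fun s => hPS s (a s) (b s))
    (polMat_mem_rowStochastic_s9 hν (mixedKernel_mem_stdSimplex hρ hPS)) (fun s s' hpos => ?_)
    (hirr (fun s => (a s, b s)) (fun s ab => P s ab.1 ab.2) fun s ab => hP s ab.1 ab.2)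
  refine sum_pos' (fun a' _ => mul_nonneg ((hν s).1 a')
    ((mixedKernel_mem_stdSimplex hρ hPS s a').1 s')) ⟨a s, mem_univ _, mul_pos (ha s) ?_⟩
  exact sum_pos' (fun b' _ => mul_nonneg ((hρ s).1 b') ((hPS s (a s) b').1 s'))
    ⟨b s, mem_univ _, mul_pos (hb s) hpos⟩

noncomputable def gain [Fintype S] [DecidableEq S] [Fintype A] [Fintype B]
    (r : S → A → B → ℝ) (ν : S → A → ℝ) (ρ : S → B → ℝ) (P : S → A → B → S → ℝ) : ℝ :=
  stationaryDist (polMat ν (mixedKernel ρ P)) ⬝ᵥ polRew ν (inducedRew r ρ)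

theorem avgR_mixedKernel_eq_gain [Fintype S] [DecidableEq S] [Nonempty S] [Fintype A] [Fintype B]
    {U : S → A → B → Set (S → ℝ)} (hUS : ∀ s a b, U s a b ⊆ stdSimplex ℝ S)
    (hirr : Assump1 fun s (ab : A × B) => U s ab.1 ab.2) (r : S → A → B → ℝ)
    {ν : S → A → ℝ} (hν : ν ∈ policySet S A) {ρ : S → B → ℝ} (hρ : ρ ∈ policySet S B)
    {P : S → A → B → S → ℝ} (hP : P ∈ kernelSet U) (s : S) :
    avgR ν (mixedKernel ρ P) (inducedRew r ρ) s = gain r ν ρ P :=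
  ((irredM_polMat_mixedKernel hUS hirr hν hρ hP).tendsto_cesaro
    (polMat_mem_rowStochastic_s9 hν (mixedKernel_mem_stdSimplex hρ fun s a b => hUS s a b (hP s a b)))
    _ s).liminf_eq

noncomputable def robustGain [Fintype S] [DecidableEq S] [Fintype A] [Fintype B]
    (U : S → A → B → Set (S → ℝ)) (r : S → A → B → ℝ) (ν : S → A → ℝ) (ρ : S → B → ℝ) : ℝ :=
  sInf (gain r ν ρ '' kernelSet U)

noncomputable def optimalGain [Fintype S] [DecidableEq S] [Fintype A] [Fintype B]
    (U : S → A → B → Set (S → ℝ)) (r : S → A → B → ℝ) (ρ : S → B → ℝ) : ℝ :=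
  sSup ((fun ν => robustGain U r ν ρ) '' policySet S A)

theorem robAvgR_inducedSet_eq_robustGain [Fintype S] [DecidableEq S] [Nonempty S] [Fintype A]
    [Fintype B] {U : S → A → B → Set (S → ℝ)} (hUS : ∀ s a b, U s a b ⊆ stdSimplex ℝ S)
    (hirr : Assump1 fun s (ab : A × B) => U s ab.1 ab.2) (r : S → A → B → ℝ)
    {ν : S → A → ℝ} (hν : ν ∈ policySet S A) {ρ : S → B → ℝ} (hρ : ρ ∈ policySet S B) (s : S) :
    robAvgR (inducedSet U ρ) ν (inducedRew r ρ) s = robustGain U r ν ρ := by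
  have hset : {x | ∃ Q : S → A → S → ℝ, (∀ s a, Q s a ∈ inducedSet U ρ s a) ∧
      x = avgR ν Q (inducedRew r ρ) s} =
      (fun Q => avgR ν Q (inducedRew r ρ) s) '' {Q | ∀ s a, Q s a ∈ inducedSet U ρ s a} := by
    ext x
    simp [eq_comm]
  rw [robAvgR, hset, setOf_forall_mem_inducedSet, Set.image_image, robustGain]
  exact congrArg sInf (Set.image_congr fun P hP => avgR_mixedKernel_eq_gain hUS hirr r hν hρ hP s)

theorem sSup_robAvgR_inducedSet_eq_optimalGain [Fintype S] [DecidableEq S] [Nonempty S]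
    [Fintype A] [Fintype B] {U : S → A → B → Set (S → ℝ)} (hUS : ∀ s a b, U s a b ⊆ stdSimplex ℝ S)
    (hirr : Assump1 fun s (ab : A × B) => U s ab.1 ab.2) (r : S → A → B → ℝ)
    {ρ : S → B → ℝ} (hρ : ρ ∈ policySet S B) (s : S) :
    sSup {x | ∃ ν : S → A → ℝ, (∀ s', ν s' ∈ stdSimplex ℝ A) ∧
      x = robAvgR (inducedSet U ρ) ν (inducedRew r ρ) s} = optimalGain U r ρ := by
  refine congrArg sSup (Set.ext fun x => ?_)
  refine exists_congr fun ν => ⟨fun ⟨hν, hx⟩ => ⟨hν, ?_⟩, fun ⟨hν, hx⟩ => ⟨hν, ?_⟩⟩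
  · rw [hx, robAvgR_inducedSet_eq_robustGain hUS hirr r hν hρ s]
  · rw [← hx, robAvgR_inducedSet_eq_robustGain hUS hirr r hν hρ s]

theorem continuousOn_gain [Fintype S] [DecidableEq S] [Nonempty S] [Fintype A] [Fintype B]
    {U : S → A → B → Set (S → ℝ)} (hUS : ∀ s a b, U s a b ⊆ stdSimplex ℝ S)
    (hirr : Assump1 fun s (ab : A × B) => U s ab.1 ab.2) (r : S → A → B → ℝ) :
    ContinuousOn (fun x : ((S → A → ℝ) × (S → B → ℝ)) × (S → A → B → S → ℝ) =>
      gain r x.1.1 x.1.2 x.2) ((policySet S A ×ˢ policySet S B) ×ˢ kernelSet U) := by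
  have hmat : Continuous fun x : ((S → A → ℝ) × (S → B → ℝ)) × (S → A → B → S → ℝ) =>
      polMat x.1.1 (mixedKernel x.1.2 x.2) := by
    refine continuous_matrix fun s s' => ?_
    simp only [polMat, mixedKernel, of_apply]
    fun_prop
  have hrew : Continuous fun x : ((S → A → ℝ) × (S → B → ℝ)) × (S → A → B → S → ℝ) =>
      polRew x.1.1 (inducedRew r x.1.2) := by
    refine continuous_pi fun s => ?_
    simp only [polRew, inducedRew]
    fun_prop
  have hstat := continuousOn_stationaryDist.comp
    (s := (policySet S A ×ˢ policySet S B) ×ˢ kernelSet U) hmat.continuousOn (by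
    rintro ⟨⟨ν, ρ⟩, P⟩ ⟨⟨hν, hρ⟩, hP⟩
    exact ⟨polMat_mem_rowStochastic_s9 hν
      (mixedKernel_mem_stdSimplex hρ fun s a b => hUS s a b (hP s a b)),
      irredM_polMat_mixedKernel hUS hirr hν hρ hP⟩)
  rw [continuousOn_iff_continuous_domRestrict] at hstat ⊢
  exact hstat.dotProduct (hrew.comp continuous_subtype_val)

theorem continuousOn_robustGain [Fintype S] [DecidableEq S] [Nonempty S] [Fintype A] [Fintype B]
    {U : S → A → B → Set (S → ℝ)} (hU : ∀ s a b, IsCompact (U s a b))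
    (hUS : ∀ s a b, U s a b ⊆ stdSimplex ℝ S) (hirr : Assump1 fun s (ab : A × B) => U s ab.1 ab.2)
    (r : S → A → B → ℝ) :
    ContinuousOn (fun x : (S → A → ℝ) × (S → B → ℝ) => robustGain U r x.1 x.2)
      (policySet S A ×ˢ policySet S B) :=
  (isCompact_kernelSet hU).continuousOn_sInf (continuousOn_gain hUS hirr r)

theorem continuousOn_optimalGain [Fintype S] [DecidableEq S] [Nonempty S] [Fintype A] [Fintype B]
    {U : S → A → B → Set (S → ℝ)} (hU : ∀ s a b, IsCompact (U s a b))
    (hUS : ∀ s a b, U s a b ⊆ stdSimplex ℝ S) (hirr : Assump1 fun s (ab : A × B) => U s ab.1 ab.2)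
    (r : S → A → B → ℝ) : ContinuousOn (optimalGain U r) (policySet S B) :=
  isCompact_policySet.continuousOn_sSup (f := fun ρ ν => robustGain U r ν ρ)
    ((continuousOn_robustGain hU hUS hirr r).comp (f := Prod.swap) continuous_swap.continuousOn
      fun _ hx => ⟨hx.2, hx.1⟩)

theorem tendsto_nhdsWithin_policySet [Fintype A] {ι : Type*} {l : Filter ι}
    {νs : ι → S → A → ℝ} {ν : S → A → ℝ} (hνs : ∀ i, νs i ∈ policySet S A)
    (hlim : ∀ s a, Tendsto (fun i => νs i s a) l (𝓝 (ν s a))) :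
    Tendsto νs l (𝓝[policySet S A] ν) :=
  tendsto_nhdsWithin_iff.2 ⟨tendsto_pi_nhds.2 fun s => tendsto_pi_nhds.2 (hlim s),
    Eventually.of_forall hνs⟩

end RobustGame

theorem stmt9_general {S A B : Type*} [Fintype S] [DecidableEq S] [Nonempty S]
    [Fintype A] [Fintype B]
    (U : S → A → B → Set (S → ℝ))
    (hU : ∀ s a b, (U s a b).Nonempty ∧ IsCompact (U s a b) ∧ Convex ℝ (U s a b) ∧
      U s a b ⊆ stdSimplex ℝ S)
    (r : S → A → B → ℝ)
    (hirr : ∀ (d : S → A × B) (P : S → A → B → S → ℝ),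
      (∀ s a b, P s a b ∈ U s a b) →
      IrredM (Matrix.of fun s s' => P s (d s).1 (d s).2 s'))
    (ρseq : ℕ → S → B → ℝ) (ρ : S → B → ℝ)
    (hρseq : ∀ n s, ρseq n s ∈ stdSimplex ℝ B) (hρ : ∀ s, ρ s ∈ stdSimplex ℝ B)
    (hρconv : ∀ s b, Filter.Tendsto (fun n => ρseq n s b) Filter.atTop (nhds (ρ s b)))
    (μseq : ℕ → S → A → ℝ) (μ : S → A → ℝ)
    (hμseq : ∀ n s, μseq n s ∈ stdSimplex ℝ A) (hμ : ∀ s, μ s ∈ stdSimplex ℝ A)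
    (hμconv : ∀ s a, Filter.Tendsto (fun n => μseq n s a) Filter.atTop (nhds (μ s a)))
    (hoptseq : ∀ n s,
      robAvgR (inducedSet U (ρseq n)) (μseq n) (inducedRew r (ρseq n)) s
        = sSup {x | ∃ ν : S → A → ℝ, (∀ s', ν s' ∈ stdSimplex ℝ A) ∧
            x = robAvgR (inducedSet U (ρseq n)) ν (inducedRew r (ρseq n)) s}) :
    ∀ s, robAvgR (inducedSet U ρ) μ (inducedRew r ρ) s
      = sSup {x | ∃ ν : S → A → ℝ, (∀ s', ν s' ∈ stdSimplex ℝ A) ∧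
          x = robAvgR (inducedSet U ρ) ν (inducedRew r ρ) s} := by
  intro s
  have hUc s a b := (hU s a b).2.1
  have hUS s a b := (hU s a b).2.2.2
  have hirr' : Assump1 fun s (ab : A × B) => U s ab.1 ab.2 := fun d P hP =>
    hirr d (fun s a b => P s (a, b)) fun s a b => hP s (a, b)
  have hopt n : robustGain U r (μseq n) (ρseq n) = optimalGain U r (ρseq n) := by
    rw [← robAvgR_inducedSet_eq_robustGain hUS hirr' r (hμseq n) (hρseq n) s,
      ← sSup_robAvgR_inducedSet_eq_optimalGain hUS hirr' r (hρseq n) s]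
    exact hoptseq n s
  rw [robAvgR_inducedSet_eq_robustGain hUS hirr' r hμ hρ s,
    sSup_robAvgR_inducedSet_eq_optimalGain hUS hirr' r hρ s]
  have hμlim := tendsto_nhdsWithin_policySet hμseq hμconv
  have hρlim := tendsto_nhdsWithin_policySet hρseq hρconv
  have hrob := ((continuousOn_robustGain hUc hUS hirr' r) (μ, ρ) ⟨hμ, hρ⟩).tendsto.comp
    (nhdsWithin_prod_eq μ ρ (policySet S A) (policySet S B) ▸ hμlim.prodMk hρlim)
  refine tendsto_nhds_unique hrob ?_
  simpa only [Function.comp_def, hopt] using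
    ((continuousOn_optimalGain hUc hUS hirr' r) ρ hρ).tendsto.comp hρlim

/-- Semi-continuity of best responses: pointwise limits of
optimal policies of the induced robust MDPs along converging opponent policies
are optimal for the limiting induced robust MDP. -/
theorem stmt9 {S A B : Type*} [Fintype S] [DecidableEq S] [Nonempty S]
    [Fintype A] [Nonempty A] [Fintype B] [Nonempty B]
    (U : S → A → B → Set (S → ℝ))
    (hU : ∀ s a b, (U s a b).Nonempty ∧ IsCompact (U s a b) ∧ Convex ℝ (U s a b) ∧
      U s a b ⊆ stdSimplex ℝ S)
    (r : S → A → B → ℝ) (hr : ∀ s a b, r s a b ∈ Set.Icc (0 : ℝ) 1)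
    (hirr : ∀ (d : S → A × B) (P : S → A → B → S → ℝ),
      (∀ s a b, P s a b ∈ U s a b) →
      IrredM (Matrix.of fun s s' => P s (d s).1 (d s).2 s'))
    (ρseq : ℕ → S → B → ℝ) (ρ : S → B → ℝ)
    (hρseq : ∀ n s, ρseq n s ∈ stdSimplex ℝ B) (hρ : ∀ s, ρ s ∈ stdSimplex ℝ B)
    (hρconv : ∀ s b, Filter.Tendsto (fun n => ρseq n s b) Filter.atTop (nhds (ρ s b)))
    (μseq : ℕ → S → A → ℝ) (μ : S → A → ℝ)
    (hμseq : ∀ n s, μseq n s ∈ stdSimplex ℝ A) (hμ : ∀ s, μ s ∈ stdSimplex ℝ A)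
    (hμconv : ∀ s a, Filter.Tendsto (fun n => μseq n s a) Filter.atTop (nhds (μ s a)))
    (hoptseq : ∀ n s,
      robAvgR (inducedSet U (ρseq n)) (μseq n) (inducedRew r (ρseq n)) s
        = sSup {x | ∃ ν : S → A → ℝ, (∀ s', ν s' ∈ stdSimplex ℝ A) ∧
            x = robAvgR (inducedSet U (ρseq n)) ν (inducedRew r (ρseq n)) s}) :
    ∀ s, robAvgR (inducedSet U ρ) μ (inducedRew r ρ) s
      = sSup {x | ∃ ν : S → A → ℝ, (∀ s', ν s' ∈ stdSimplex ℝ A) ∧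
          x = robAvgR (inducedSet U ρ) ν (inducedRew r ρ) s} :=
  stmt9_general U hU r hirr ρseq ρ hρseq hρ hρconv μseq μ hμseq hμ hμconv hoptseq
end
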